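/- For f = x^2 + y^2 and g = xy, the operator R(s) = y^2 ∂_x ∂_y − x y ∂_y^2 − y ∂_x s − x ∂_y s + y ∂_x − 2x ∂_y annihilates (1/g)·(f/g)^s; that is, applying the natural action of the Weyl algebra with parameter s to the element (1/(xy))·((x^2+y^2)/(xy))^s of C[x,y,s,1/(fg)]·(f/g)^s gives zero. -/

import Mathlib

/-! Since `D v = -v · D(xy)/(xy)` for `v = 1/(xy)`, each twisted derivative of `v · r` is
`v · (D r + r · (s ω - D(xy)/(xy)))`. So `R(s)` applied to `v` is `v` times an explicit rational
function of `x, y, s`, which vanishes after clearing the denominators `x`, `y` and `x² + y²`. -/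

noncomputable section

/-- The field `ℂ(x, y, s)` of rational functions, in which the module
`ℂ[x, y, s, 1/(fg)]·(f/g)^s` embeds (identifying `h·(f/g)^s` with its coefficient `h`). -/
abbrev K8 := FractionRing (MvPolynomial (Fin 3) ℂ)

def x8 : K8 := algebraMap (MvPolynomial (Fin 3) ℂ) K8 (MvPolynomial.X 0)
def y8 : K8 := algebraMap (MvPolynomial (Fin 3) ℂ) K8 (MvPolynomial.X 1)
def s8 : K8 := algebraMap (MvPolynomial (Fin 3) ℂ) K8 (MvPolynomial.X 2)

theorem MvPolynomial.X_sq_add_X_sq_ne_zero {σ R : Type*} [CommRing R] [Nontrivial R] {i j : σ}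
    (hij : i ≠ j) : (X i ^ 2 + X j ^ 2 : MvPolynomial σ R) ≠ 0 := by
  classical
  intro h
  simpa [hij] using congrArg (eval (Pi.single i 1)) h

theorem MvPolynomial.algebraMap_X_ne_zero {σ R K : Type*} [CommRing R] [Nontrivial R]
    [CommRing K] [Algebra (MvPolynomial σ R) K] [IsFractionRing (MvPolynomial σ R) K] (i : σ) :
    algebraMap (MvPolynomial σ R) K (X i) ≠ 0 :=
  (map_ne_zero_iff _ (IsFractionRing.injective _ _)).mpr (X_ne_zero i)

theorem twisted_action_annihilates_inv_mul {R K : Type*} [CommRing R] [Field K] [Algebra R K]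
    (dx dy : Derivation R K K) {x y s : K} (hx : x ≠ 0) (hy : y ≠ 0) (hf : x ^ 2 + y ^ 2 ≠ 0)
    (hdxx : dx x = 1) (hdxy : dx y = 0) (hdxs : dx s = 0)
    (hdyy : dy y = 1) (hdyx : dy x = 0) (hdys : dy s = 0) :
    let f : K := x ^ 2 + y ^ 2
    let g : K := x * y
    let Ax : K → K := fun h => dx h + s * h * ((2 * x) / f - y / g)
    let Ay : K → K := fun h => dy h + s * h * ((2 * y) / f - x / g)
    let v : K := 1 / g
    y ^ 2 * Ax (Ay v) - x * y * Ay (Ay v) - y * Ax (s * v) - x * Ay (s * v)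
      + y * Ax v - 2 * x * Ay v = 0 := by
  intro f g Ax Ay v
  have h2x : dx 2 = 0 := by simpa using dx.map_natCast 2
  have h2y : dy 2 = 0 := by simpa using dy.map_natCast 2
  set p := s * ((2 * x) / f - y / g) - 1 / x
  set q := s * ((2 * y) / f - x / g) - 1 / y
  have hAx_s (h : K) : Ax (s * h) = s * Ax h := by
    simp only [Ax, Derivation.leibniz, hdxs, smul_eq_mul]; ring
  have hAy_s (h : K) : Ay (s * h) = s * Ay h := by
    simp only [Ay, Derivation.leibniz, hdys, smul_eq_mul]; ring
  have hAxv : Ax v = v * p := by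
    simp only [Ax, v, p, g, f, Derivation.leibniz_div, Derivation.leibniz, hdxx, hdxy, smul_eq_mul,
      Derivation.map_one_eq_zero]
    field_simp; ring
  have hAyv : Ay v = v * q := by
    simp only [Ay, v, q, g, f, Derivation.leibniz_div, Derivation.leibniz, hdyx, hdyy, smul_eq_mul,
      Derivation.map_one_eq_zero]
    field_simp; ring
  have hAxAyv : Ax (Ay v) = v * (p * q - 4 * s * x * y / f ^ 2) := by
    rw [hAyv]
    simp only [Ax, v, q, p, g, f, Derivation.leibniz_div, Derivation.leibniz, Derivation.leibniz_pow,
      map_add, map_sub, hdxx, hdxy, hdxs, h2x, smul_eq_mul, nsmul_eq_mul, Derivation.map_one_eq_zero]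
    field_simp; ring
  have hAyAyv : Ay (Ay v) = v * (q ^ 2 + (1 + s) / y ^ 2 + 2 * s * (x ^ 2 - y ^ 2) / f ^ 2) := by
    rw [hAyv]
    simp only [Ay, v, q, g, f, Derivation.leibniz_div, Derivation.leibniz, Derivation.leibniz_pow,
      map_add, map_sub, hdyx, hdyy, hdys, h2y, smul_eq_mul, nsmul_eq_mul, Derivation.map_one_eq_zero]
    field_simp; ring
  rw [hAxAyv, hAyAyv, hAx_s, hAy_s, hAxv, hAyv]
  simp only [v, p, q, g, f]
  field_simp; ring

theorem x8_sq_add_y8_sq_ne_zero : x8 ^ 2 + y8 ^ 2 ≠ 0 := by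
  have hij : (0 : Fin 3) ≠ 1 := by decide
  simpa [x8, y8] using (map_ne_zero_iff _ (IsFractionRing.injective (MvPolynomial (Fin 3) ℂ) K8)).mpr
    (MvPolynomial.X_sq_add_X_sq_ne_zero (R := ℂ) hij)

/-- for `f = x² + y²` and `g = xy`, the operator
`R(s) = y²∂ₓ∂_y − xy∂_y² − y∂ₓs − x∂_y s + y∂ₓ − 2x∂_y`
annihilates `(1/g)·(f/g)^s`: applying the natural action (where `∂ₓ` acts on a coefficient
`h` by `∂h/∂x + s·h·(fₓ/f − gₓ/g)`) to the element with coefficient `1/(xy)` gives zero. -/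
theorem stmt8 (dx dy : Derivation ℂ K8 K8)
    (hdxx : dx x8 = 1) (hdxy : dx y8 = 0) (hdxs : dx s8 = 0)
    (hdyy : dy y8 = 1) (hdyx : dy x8 = 0) (hdys : dy s8 = 0) :
    letI x := x8; letI y := y8; letI s := s8
    letI f : K8 := x ^ 2 + y ^ 2
    letI g : K8 := x * y
    letI Ax : K8 → K8 := fun h => dx h + s * h * ((2 * x) / f - y / g)
    letI Ay : K8 → K8 := fun h => dy h + s * h * ((2 * y) / f - x / g)
    letI v : K8 := 1 / g
    y ^ 2 * Ax (Ay v) - x * y * Ay (Ay v) - y * Ax (s * v) - x * Ay (s * v)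
      + y * Ax v - 2 * x * Ay v = 0 :=
  twisted_action_annihilates_inv_mul dx dy (MvPolynomial.algebraMap_X_ne_zero 0)
    (MvPolynomial.algebraMap_X_ne_zero 1)
    x8_sq_add_y8_sq_ne_zero hdxx hdxy hdxs hdyy hdyx hdys

end
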